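/- In the chain-of-firing-squads program with n levels — facts s0 : signal_0, and for each i < n rules a_i : fireA_i ← signal_i, b_i : fireB_i ← signal_i, a'_{i+1} : signal_{i+1} ← fireA_i, b'_{i+1} : signal_{i+1} ← fireB_i — the unique justified model is the set of all 3n+1 atoms occurring in the program, and it has exactly 2^n distinct explanations. -/
import Mathlib


/-- A labelled rule: `label : head ← pbody ∧ ¬ nbody ∧ ¬¬ nnbody`. -/
structure LRule (At L : Type) where
  label : L
  head : Finset At
  pbody : Finset At
  nbody : Finset At
  nnbody : Finset At

variable {At L : Type}

/-- `I` satisfies the negative part of the body of `r`. -/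
def satNBody (I : Set At) (r : LRule At L) : Prop :=
  (∀ s ∈ r.nbody, s ∉ I) ∧ (∀ t ∈ r.nnbody, t ∈ I)

/-- `I` satisfies the (full) body of `r`. -/
def satBody (I : Set At) (r : LRule At L) : Prop :=
  (∀ q ∈ r.pbody, q ∈ I) ∧ satNBody I r

/-- Classical satisfaction of a rule. -/
def satRule (I : Set At) (r : LRule At L) : Prop :=
  satBody I r → ∃ p ∈ r.head, p ∈ I

/-- `I` is a classical model of the program `P`. -/
def IsModel (I : Set At) (P : Set (LRule At L)) : Prop := ∀ r ∈ P, satRule I r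

/-- A labelled program has pairwise distinct labels. -/
def IsProgram (P : Set (LRule At L)) : Prop :=
  ∀ r ∈ P, ∀ r' ∈ P, r.label = r'.label → r = r'

/-- The positive part of a rule (keeping its label). -/
def reductRule (r : LRule At L) : LRule At L :=
  { r with nbody := ∅, nnbody := ∅ }

/-- The reduct `P^I` of a set of labelled rules. -/
def reduct (P : Set (LRule At L)) (I : Set At) : Set (LRule At L) :=
  { r' | ∃ r ∈ P, satNBody I r ∧ r' = reductRule r }

/-- The rules of `P` supporting atom `p` under `I`. -/
def SupRules (I : Set At) (P : Set (LRule At L)) (p : At) : Set (LRule At L) :=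
  { r | r ∈ P ∧ p ∈ r.head ∧ satBody I r }

/-- `(E, lab)` is a support graph of `I` under `P`: vertices are the atoms of `I`,
`lab` injectively labels each atom of `I` with the label of a rule supporting it
whose positive body atoms are exactly its in-neighbours. -/
def IsSupportGraph (I : Set At) (P : Set (LRule At L))
    (E : At → At → Prop) (lab : At → L) : Prop :=
  (∀ p q, E p q → p ∈ I ∧ q ∈ I) ∧
  Set.InjOn lab I ∧
  (∀ p ∈ I, ∃ r ∈ P, r.label = lab p ∧ p ∈ r.head ∧ satBody I r ∧
    (∀ q, E q p ↔ q ∈ r.pbody))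

/-- An explanation is an acyclic (well-founded) support graph. -/
def IsExplanation (I : Set At) (P : Set (LRule At L))
    (E : At → At → Prop) (lab : At → L) : Prop :=
  IsSupportGraph I P E lab ∧ WellFounded E

/-- A supported model: a classical model admitting a support graph. -/
def IsSupportedModel (I : Set At) (P : Set (LRule At L)) : Prop :=
  IsModel I P ∧ ∃ E lab, IsSupportGraph I P E lab

/-- A justified model: a classical model admitting an explanation. -/
def IsJustifiedModel (I : Set At) (P : Set (LRule At L)) : Prop :=
  IsModel I P ∧ ∃ E lab, IsExplanation I P E lab

/-- A stable model: a minimal classical model of the reduct `P^I`. -/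
def IsStableModel (I : Set At) (P : Set (LRule At L)) : Prop :=
  IsModel I (reduct P I) ∧ ∀ J ⊆ I, IsModel J (reduct P I) → J = I

inductive SqA (n : ℕ) : Type
  | signal (i : Fin (n+1)) | fireA (i : Fin n) | fireB (i : Fin n)
deriving DecidableEq

inductive SqL (n : ℕ) : Type
  | s0 | a (i : Fin n) | b (i : Fin n) | a' (i : Fin n) | b' (i : Fin n)
deriving DecidableEq

/-- The chain-of-firing-squads program with `n` levels. -/
def sqProg (n : ℕ) : Set (LRule (SqA n) (SqL n)) :=
  {⟨SqL.s0, {SqA.signal 0}, ∅, ∅, ∅⟩} ∪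
  { r | ∃ i : Fin n, r = ⟨SqL.a i, {SqA.fireA i}, {SqA.signal i.castSucc}, ∅, ∅⟩ } ∪
  { r | ∃ i : Fin n, r = ⟨SqL.b i, {SqA.fireB i}, {SqA.signal i.castSucc}, ∅, ∅⟩ } ∪
  { r | ∃ i : Fin n, r = ⟨SqL.a' i, {SqA.signal i.succ}, {SqA.fireA i}, ∅, ∅⟩ } ∪
  { r | ∃ i : Fin n, r = ⟨SqL.b' i, {SqA.signal i.succ}, {SqA.fireB i}, ∅, ∅⟩ }

section Aux

variable {n : ℕ}

/-- The canonical rules. -/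
def rule0 (n : ℕ) : LRule (SqA n) (SqL n) := ⟨SqL.s0, {SqA.signal 0}, ∅, ∅, ∅⟩
def ruleA (i : Fin n) : LRule (SqA n) (SqL n) :=
  ⟨SqL.a i, {SqA.fireA i}, {SqA.signal i.castSucc}, ∅, ∅⟩
def ruleB (i : Fin n) : LRule (SqA n) (SqL n) :=
  ⟨SqL.b i, {SqA.fireB i}, {SqA.signal i.castSucc}, ∅, ∅⟩
def ruleA' (i : Fin n) : LRule (SqA n) (SqL n) :=
  ⟨SqL.a' i, {SqA.signal i.succ}, {SqA.fireA i}, ∅, ∅⟩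
def ruleB' (i : Fin n) : LRule (SqA n) (SqL n) :=
  ⟨SqL.b' i, {SqA.signal i.succ}, {SqA.fireB i}, ∅, ∅⟩

lemma mem_sqProg {r : LRule (SqA n) (SqL n)} :
    r ∈ sqProg n ↔ r = rule0 n ∨ (∃ i, r = ruleA i) ∨ (∃ i, r = ruleB i) ∨
      (∃ i, r = ruleA' i) ∨ (∃ i, r = ruleB' i) := by
  simp only [sqProg, Set.mem_union, Set.mem_singleton_iff, Set.mem_setOf_eq,
    rule0, ruleA, ruleB, ruleA', ruleB']
  tauto

lemma rule0_mem : rule0 n ∈ sqProg n := mem_sqProg.2 (Or.inl rfl)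
lemma ruleA_mem (i : Fin n) : ruleA i ∈ sqProg n := mem_sqProg.2 (Or.inr (Or.inl ⟨i, rfl⟩))
lemma ruleB_mem (i : Fin n) : ruleB i ∈ sqProg n :=
  mem_sqProg.2 (Or.inr (Or.inr (Or.inl ⟨i, rfl⟩)))
lemma ruleA'_mem (i : Fin n) : ruleA' i ∈ sqProg n :=
  mem_sqProg.2 (Or.inr (Or.inr (Or.inr (Or.inl ⟨i, rfl⟩))))
lemma ruleB'_mem (i : Fin n) : ruleB' i ∈ sqProg n :=
  mem_sqProg.2 (Or.inr (Or.inr (Or.inr (Or.inr ⟨i, rfl⟩))))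

lemma satBody_univ {r : LRule (SqA n) (SqL n)} (hr : r ∈ sqProg n) :
    satBody (Set.univ : Set (SqA n)) r := by
  rcases mem_sqProg.1 hr with h | ⟨i, h⟩ | ⟨i, h⟩ | ⟨i, h⟩ | ⟨i, h⟩ <;>
    subst h <;>
    simp [satBody, satNBody, rule0, ruleA, ruleB, ruleA', ruleB']

/-- The canonical labelling from a choice function. -/
def sqF (g : Fin n → Bool) : SqA n → SqL n
  | .signal i => i.cases SqL.s0 (fun j => if g j then SqL.a' j else SqL.b' j)
  | .fireA i => SqL.a i
  | .fireB i => SqL.b i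

/-- The canonical edge relation from a choice function. -/
def sqE (g : Fin n → Bool) (q p : SqA n) : Prop :=
  match p with
  | .signal i => i.cases False
      (fun j => q = (if g j then SqA.fireA j else SqA.fireB j) : Fin n → Prop)
  | .fireA i => q = SqA.signal i.castSucc
  | .fireB i => q = SqA.signal i.castSucc

def sqRank : SqA n → ℕ
  | .signal i => 2 * i
  | .fireA i => 2 * i + 1
  | .fireB i => 2 * i + 1

lemma sqE_wf (g : Fin n → Bool) : WellFounded (sqE g) := by
  have : Subrelation (sqE g) (InvImage (· < ·) (sqRank (n := n))) := by
    intro q p h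
    cases p with
    | signal i =>
      induction i using Fin.cases with
      | zero => simp [sqE] at h
      | succ j =>
        simp only [sqE, Fin.cases_succ] at h
        show sqRank q < sqRank (SqA.signal j.succ)
        split at h <;> subst h <;> simp [sqRank, Fin.val_succ] <;> omega
    | fireA i =>
      simp only [sqE] at h; subst h
      show sqRank (SqA.signal i.castSucc) < sqRank (SqA.fireA i)
      simp [sqRank]
    | fireB i =>
      simp only [sqE] at h; subst h
      show sqRank (SqA.signal i.castSucc) < sqRank (SqA.fireB i)
      simp [sqRank]
  exact Subrelation.wf this (InvImage.wf _ Nat.lt_wfRel.wf)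

lemma sqF_injective (g : Fin n → Bool) : Function.Injective (sqF g) := by
  intro p q h
  cases p with
  | signal i => induction i using Fin.cases with
    | zero => cases q with
      | signal i' => induction i' using Fin.cases with
        | zero => rfl
        | succ j' => simp only [sqF, Fin.cases_zero, Fin.cases_succ] at h; split at h <;> simp at h
      | fireA i' => simp [sqF] at h
      | fireB i' => simp [sqF] at h
    | succ j => cases q with
      | signal i' => induction i' using Fin.cases with
        | zero => simp only [sqF, Fin.cases_zero, Fin.cases_succ] at h; split at h <;> simp at h
        | succ j' =>
          simp only [sqF, Fin.cases_succ] at h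
          split at h <;> split at h <;> simp_all
      | fireA i' => simp only [sqF, Fin.cases_succ] at h; split at h <;> simp at h
      | fireB i' => simp only [sqF, Fin.cases_succ] at h; split at h <;> simp at h
  | fireA i => cases q with
    | signal i' => induction i' using Fin.cases with
      | zero => simp [sqF] at h
      | succ j' => simp only [sqF, Fin.cases_succ] at h; split at h <;> simp at h
    | fireA i' => simp_all [sqF]
    | fireB i' => simp [sqF] at h
  | fireB i => cases q with
    | signal i' => induction i' using Fin.cases with
      | zero => simp [sqF] at h
      | succ j' => simp only [sqF, Fin.cases_succ] at h; split at h <;> simp at h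
    | fireA i' => simp [sqF] at h
    | fireB i' => simp_all [sqF]

lemma sqF_explanation (g : Fin n → Bool) :
    IsExplanation (Set.univ : Set (SqA n)) (sqProg n) (sqE g) (sqF g) := by
  refine ⟨⟨fun p q _ => ⟨trivial, trivial⟩, (sqF_injective g).injOn, ?_⟩, sqE_wf g⟩
  intro p _
  cases p with
  | signal i =>
    induction i using Fin.cases with
    | zero =>
      refine ⟨rule0 n, rule0_mem, ?_, ?_, satBody_univ rule0_mem, ?_⟩
      · simp [rule0, sqF]
      · simp [rule0]
      · intro q; simp [sqE, rule0]
    | succ j =>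
      by_cases hg : g j
      · refine ⟨ruleA' j, ruleA'_mem j, ?_, ?_, satBody_univ (ruleA'_mem j), ?_⟩
        · simp [ruleA', sqF, hg]
        · simp [ruleA']
        · intro q; simp [sqE, ruleA', hg]
      · refine ⟨ruleB' j, ruleB'_mem j, ?_, ?_, satBody_univ (ruleB'_mem j), ?_⟩
        · simp [ruleB', sqF, hg]
        · simp [ruleB']
        · intro q; simp [sqE, ruleB', hg]
  | fireA i =>
    refine ⟨ruleA i, ruleA_mem i, ?_, ?_, satBody_univ (ruleA_mem i), ?_⟩
    · simp [ruleA, sqF]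
    · simp [ruleA]
    · intro q; simp [sqE, ruleA]
  | fireB i =>
    refine ⟨ruleB i, ruleB_mem i, ?_, ?_, satBody_univ (ruleB_mem i), ?_⟩
    · simp [ruleB, sqF]
    · simp [ruleB]
    · intro q; simp [sqE, ruleB]

lemma char_of_supportGraph {E : SqA n → SqA n → Prop} {f : SqA n → SqL n}
    (h : IsSupportGraph (Set.univ : Set (SqA n)) (sqProg n) E f) :
    f (SqA.signal 0) = SqL.s0 ∧ (∀ i, f (SqA.fireA i) = SqL.a i) ∧
    (∀ i, f (SqA.fireB i) = SqL.b i) ∧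
    (∀ j : Fin n, f (SqA.signal j.succ) = SqL.a' j ∨ f (SqA.signal j.succ) = SqL.b' j) := by
  obtain ⟨-, -, hsup⟩ := h
  refine ⟨?_, ?_, ?_, ?_⟩
  · obtain ⟨r, hr, hlab, hhead, -⟩ := hsup (SqA.signal 0) trivial
    rcases mem_sqProg.1 hr with h | ⟨i, h⟩ | ⟨i, h⟩ | ⟨i, h⟩ | ⟨i, h⟩ <;> subst h <;>
      simp_all [rule0, ruleA, ruleB, ruleA', ruleB']
    all_goals exact absurd hhead.symm (Fin.succ_ne_zero i)
  · intro i
    obtain ⟨r, hr, hlab, hhead, -⟩ := hsup (SqA.fireA i) trivial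
    rcases mem_sqProg.1 hr with h | ⟨k, h⟩ | ⟨k, h⟩ | ⟨k, h⟩ | ⟨k, h⟩ <;> subst h <;>
      simp_all [rule0, ruleA, ruleB, ruleA', ruleB']
  · intro i
    obtain ⟨r, hr, hlab, hhead, -⟩ := hsup (SqA.fireB i) trivial
    rcases mem_sqProg.1 hr with h | ⟨k, h⟩ | ⟨k, h⟩ | ⟨k, h⟩ | ⟨k, h⟩ <;> subst h <;>
      simp_all [rule0, ruleA, ruleB, ruleA', ruleB']
  · intro j
    obtain ⟨r, hr, hlab, hhead, -⟩ := hsup (SqA.signal j.succ) trivial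
    rcases mem_sqProg.1 hr with h | ⟨k, h⟩ | ⟨k, h⟩ | ⟨k, h⟩ | ⟨k, h⟩ <;> subst h <;>
      simp_all [rule0, ruleA, ruleB, ruleA', ruleB', Fin.succ_inj]
    all_goals (first | (left; rw [Fin.succ_inj.1 hhead.symm]) | (right; rw [Fin.succ_inj.1 hhead.symm]) | exact absurd hhead (Fin.succ_ne_zero j))

def sqEquiv (n : ℕ) : SqA n ≃ (Fin (n+1) ⊕ (Fin n ⊕ Fin n)) where
  toFun p := match p with
    | .signal i => .inl i
    | .fireA i => .inr (.inl i)
    | .fireB i => .inr (.inr i)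
  invFun x := match x with
    | .inl i => .signal i
    | .inr (.inl i) => .fireA i
    | .inr (.inr i) => .fireB i
  left_inv p := by cases p <;> rfl
  right_inv x := by rcases x with i | i | i <;> rfl

end Aux

theorem squads_unique_justified_two_pow_explanations (n : ℕ) :
    Nat.card (SqA n) = 3 * n + 1 ∧
    IsJustifiedModel (Set.univ : Set (SqA n)) (sqProg n) ∧
    (∀ I : Set (SqA n), IsJustifiedModel I (sqProg n) → I = Set.univ) ∧
    Nat.card {f : SqA n → SqL n //
      ∃ E, IsExplanation (Set.univ : Set (SqA n)) (sqProg n) E f} = 2 ^ n := by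
  refine ⟨?_, ?_, ?_, ?_⟩
  · rw [Nat.card_congr (sqEquiv n), Nat.card_sum, Nat.card_sum]
    simp only [Nat.card_eq_fintype_card, Fintype.card_fin]
    omega
  · refine ⟨?_, sqE (fun _ => true), sqF (fun _ => true), sqF_explanation _⟩
    intro r hr _
    rcases mem_sqProg.1 hr with h | ⟨i, h⟩ | ⟨i, h⟩ | ⟨i, h⟩ | ⟨i, h⟩ <;> subst h <;>
      simp [rule0, ruleA, ruleB, ruleA', ruleB']
  · rintro I ⟨hmod, -⟩
    have hsig : ∀ j : Fin (n+1), SqA.signal j ∈ I := by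
      intro j
      induction j using Fin.induction with
      | zero =>
        have := hmod _ rule0_mem
        simpa [satRule, satBody, satNBody, rule0] using this
      | succ j ih =>
        have hA : SqA.fireA j ∈ I := by
          have := hmod _ (ruleA_mem j)
          simp only [satRule, satBody, satNBody, ruleA, Finset.mem_singleton,
            Finset.notMem_empty, false_implies, implies_true, and_true,
            forall_eq, exists_eq_left, true_and] at this
          exact this ih
        have := hmod _ (ruleA'_mem j)
        simp only [satRule, satBody, satNBody, ruleA', Finset.mem_singleton,
          Finset.notMem_empty, false_implies, implies_true, and_true,
          forall_eq, exists_eq_left, true_and] at this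
        exact this hA
    apply Set.eq_univ_of_forall
    intro p
    cases p with
    | signal i => exact hsig i
    | fireA i =>
      have := hmod _ (ruleA_mem i)
      simp only [satRule, satBody, satNBody, ruleA, Finset.mem_singleton,
        Finset.notMem_empty, false_implies, implies_true, and_true,
        forall_eq, exists_eq_left, true_and] at this
      exact this (hsig _)
    | fireB i =>
      have := hmod _ (ruleB_mem i)
      simp only [satRule, satBody, satNBody, ruleB, Finset.mem_singleton,
        Finset.notMem_empty, false_implies, implies_true, and_true,
        forall_eq, exists_eq_left, true_and] at this
      exact this (hsig _)
  · classical
    have hbij : Function.Bijective (fun g : Fin n → Bool =>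
        (⟨sqF g, sqE g, sqF_explanation g⟩ :
          {f : SqA n → SqL n //
            ∃ E, IsExplanation (Set.univ : Set (SqA n)) (sqProg n) E f})) := by
      constructor
      · intro g g' h
        have h' : sqF g = sqF g' := congrArg Subtype.val h
        funext j
        have hj := congrFun h' (SqA.signal j.succ)
        simp only [sqF, Fin.cases_succ] at hj
        cases hg : g j <;> cases hg' : g' j <;> simp_all
      · rintro ⟨f, E, hE⟩
        refine ⟨fun j => decide (f (SqA.signal j.succ) = SqL.a' j), Subtype.ext ?_⟩
        obtain ⟨h0, hA, hB, hS⟩ := char_of_supportGraph hE.1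
        funext p
        cases p with
        | signal i =>
          induction i using Fin.cases with
          | zero => simpa [sqF] using h0.symm
          | succ j =>
            rcases hS j with h | h
            · simp [sqF, h]
            · have hne : ¬ (f (SqA.signal j.succ) = SqL.a' j) := by simp [h]
              simp [sqF, hne, h]
        | fireA i => simpa [sqF] using (hA i).symm
        | fireB i => simpa [sqF] using (hB i).symm
    rw [← Nat.card_eq_of_bijective _ hbij]
    simp [Nat.card_eq_fintype_card]
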